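/- The orbit of the point z = (z_1, ..., z_{2q}) in the torus T^{2q} = R^{2q}/Z^{2q} under the abelian semigroup \Omega generated by the maps w \mapsto p_i \cdot w mod Z^{2q} (for 1 \leq i \leq q) is not dense in T^{2q}. -/

import Mathlib

/-!
Write the multiplier as `m = ∏ p_j ^ n_j` and let `n_i` be the largest exponent; the choice of `N`
gives `m ≤ p_i ^ (N * n_i)`. The two lacunary series in `p_i` have the exponents `N ^ t` with
`t ≥ 2` even, resp. odd. Put `L = ⌊log_N n_i⌋`: in the series containing `N ^ (L + 2)` all earlier
exponents are at most `N ^ L ≤ n_i`, so those terms become integers after multiplication by `m`,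
while the tail from `N ^ (L + 2) ≥ N * n_i + 2` on contributes at most
`2 m p_i ^ (-N ^ (L + 2)) ≤ 1/2`.
So every point of the orbit has a coordinate in `[0, 1/2]` mod 1 and misses the box `(1/2, 1) ^ 2q`.
-/

open Set

lemma not_dense_of_forall_exists_coord_mem_Icc {ι : Type*} [Finite ι] {T : ℝ} [Fact (0 < T)]
    {S : Set (ι → AddCircle T)} (hS : ∀ w ∈ S, ∃ j, ∃ r ∈ Icc 0 (T / 2), w j = r) :
    ¬ Dense S := by
  have hT : 0 < T := Fact.out
  intro hd
  have hV : IsOpen (((↑) : ℝ → AddCircle T) '' Ioo (T / 2) T) :=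
    QuotientAddGroup.isOpenMap_coe _ isOpen_Ioo
  obtain ⟨w, hwS, hwV⟩ := hd.exists_mem_open (isOpen_set_pi finite_univ fun _ _ => hV)
    ⟨fun _ => ((3 * T / 4 : ℝ) : AddCircle T), fun _ _ => ⟨_, ⟨by linarith, by linarith⟩, rfl⟩⟩
  obtain ⟨j, r, hr, hwj⟩ := hS w hwS
  obtain ⟨v, hv, hvr⟩ := hwV j trivial
  rw [hwj, AddCircle.coe_eq_coe_iff_of_mem_Ico (a := 0)
    ⟨by linarith [hv.1], by linarith [hv.2]⟩ ⟨hr.1, by linarith [hr.2]⟩] at hvr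
  linarith [hv.1, hr.2]

lemma summable_inv_pow_comp {P : ℝ} (hP : 1 < P) {E : ℕ → ℕ} (hE : StrictMono E) :
    Summable fun k => (P ^ E k)⁻¹ :=
  (summable_geometric_of_lt_one (inv_nonneg.2 (by linarith))
    (inv_lt_one_of_one_lt₀ hP)).of_nonneg_of_le (fun _ => by positivity) fun k => by
      rw [← inv_pow]
      exact pow_le_pow_of_le_one (inv_nonneg.2 (by linarith)) (inv_le_one_of_one_le₀ hP.le)
        (hE.id_le k)

lemma tsum_inv_pow_comp_add_le {P : ℝ} (hP : 2 ≤ P) {E : ℕ → ℕ} (hE : StrictMono E) (k₀ : ℕ) :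
    ∑' k, (P ^ E (k + k₀))⁻¹ ≤ 2 * (P ^ E k₀)⁻¹ := by
  have h0 : 0 ≤ P⁻¹ := inv_nonneg.2 (by linarith)
  have h1 : P⁻¹ ≤ 2⁻¹ := inv_anti₀ two_pos hP
  calc ∑' k, (P ^ E (k + k₀))⁻¹
      ≤ ∑' k, (P ^ E k₀)⁻¹ * P⁻¹ ^ k := by
        refine Summable.tsum_le_tsum (fun k => ?_)
          ((summable_nat_add_iff k₀).2 (summable_inv_pow_comp (by linarith) hE))
          ((summable_geometric_of_lt_one h0 (by linarith)).mul_left _)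
        rw [← inv_pow, ← inv_pow, ← pow_add]
        exact pow_le_pow_of_le_one h0 (by linarith) (by linarith [hE.add_le_nat k k₀])
    _ = (P ^ E k₀)⁻¹ * (1 - P⁻¹)⁻¹ := by
        rw [tsum_mul_left, tsum_geometric_of_lt_one h0 (by linarith)]
    _ ≤ (P ^ E k₀)⁻¹ * 2 := by
        gcongr
        rw [inv_le_comm₀ (by linarith) two_pos]
        linarith
    _ = 2 * (P ^ E k₀)⁻¹ := mul_comm _ _

lemma nsmul_coe_tsum_inv_pow_eq_coe_tail {P : ℕ} (hP : 1 < P) {E : ℕ → ℕ} (hE : StrictMono E)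
    {m k₀ : ℕ} (hdvd : ∀ k < k₀, P ^ E k ∣ m) :
    m • ((∑' k, ((P : ℝ) ^ E k)⁻¹ : ℝ) : AddCircle (1 : ℝ)) =
      ((m * ∑' k, ((P : ℝ) ^ E (k + k₀))⁻¹ : ℝ) : AddCircle (1 : ℝ)) := by
  rw [← (summable_inv_pow_comp (by exact_mod_cast hP) hE).sum_add_tsum_nat_add k₀,
    ← AddCircle.coe_nsmul, nsmul_eq_mul, mul_add, AddCircle.coe_add, add_eq_right,
    AddCircle.coe_eq_zero_iff]
  refine ⟨((∑ k ∈ Finset.range k₀, m / P ^ E k : ℕ) : ℤ), ?_⟩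
  rw [zsmul_one, Int.cast_natCast, Nat.cast_sum, Finset.mul_sum]
  refine Finset.sum_congr rfl fun k hk => ?_
  rw [Nat.cast_div (hdvd k (Finset.mem_range.1 hk)) (by positivity), Nat.cast_pow, div_eq_mul_inv]

lemma exists_nsmul_coe_tsum_inv_pow_eq_coe_mem_Icc {P : ℕ} (hP : 2 ≤ P) {E : ℕ → ℕ}
    (hE : StrictMono E) {m k₀ : ℕ} (hdvd : ∀ k < k₀, P ^ E k ∣ m) (hm : 4 * m ≤ P ^ E k₀) :
    ∃ r ∈ Icc (0 : ℝ) (1 / 2),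
      m • ((∑' k, ((P : ℝ) ^ E k)⁻¹ : ℝ) : AddCircle (1 : ℝ)) = r := by
  refine ⟨_, ⟨by positivity, ?_⟩, nsmul_coe_tsum_inv_pow_eq_coe_tail hP hE hdvd⟩
  have hm' : 4 * (m : ℝ) ≤ (P : ℝ) ^ E k₀ := by exact_mod_cast hm
  calc (m : ℝ) * ∑' k, ((P : ℝ) ^ E (k + k₀))⁻¹
      ≤ m * (2 * ((P : ℝ) ^ E k₀)⁻¹) := by
        gcongr
        exact tsum_inv_pow_comp_add_le (by exact_mod_cast hP) hE k₀
    _ ≤ 1 / 2 := by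
        rw [← mul_assoc, mul_comm (m : ℝ), ← div_eq_mul_inv, div_le_iff₀ (by positivity)]
        linarith

lemma exists_nsmul_coe_lacunary_eq_coe_mem_Icc {P N m n : ℕ} (hP : 2 ≤ P) (hN : 2 ≤ N)
    (hdvd : P ^ n ∣ m) (hm : m ≤ P ^ (N * n)) :
    ∃ δ < 2, ∃ r ∈ Icc (0 : ℝ) (1 / 2),
      m • ((∑' k, ((P : ℝ) ^ N ^ (2 * (k + 1) + δ))⁻¹ : ℝ) : AddCircle (1 : ℝ)) = r := by
  set L := Nat.log N n
  have hE : StrictMono fun k => N ^ (2 * (k + 1) + L % 2) :=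
    fun a b hab => Nat.pow_lt_pow_right hN (by omega)
  refine ⟨L % 2, Nat.mod_lt _ two_pos,
    exists_nsmul_coe_tsum_inv_pow_eq_coe_mem_Icc hP hE (k₀ := L / 2) (fun k hk => ?_) ?_⟩
  · have hn : n ≠ 0 := by
      rintro rfl
      simp [L] at hk
    exact (pow_dvd_pow P (Nat.pow_le_of_le_log hn (by omega))).trans hdvd
  · have hL : n < N ^ (L + 1) := Nat.lt_pow_succ_log_self hN n
    have hexp : N * n + 2 ≤ N ^ (2 * (L / 2 + 1) + L % 2) := by
      rw [show 2 * (L / 2 + 1) + L % 2 = L + 1 + 1 by omega, pow_succ, mul_comm _ N]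
      nlinarith
    calc 4 * m ≤ P ^ 2 * P ^ (N * n) := by gcongr; nlinarith
      _ = P ^ (N * n + 2) := by ring
      _ ≤ _ := Nat.pow_le_pow_right (by omega) hexp

lemma pow_lt_pow_of_mul_log_div_log_lt {a b q N : ℕ} (ha : 1 < a) (hb : 0 < b)
    (h : q * Real.log b / Real.log a < N) : b ^ q < a ^ N := by
  have hloga : 0 < Real.log a := Real.log_pos (by exact_mod_cast ha)
  rw [div_lt_iff₀ hloga, ← Real.log_pow, ← Real.log_pow,
    Real.log_lt_log_iff (by positivity) (by positivity)] at h
  exact_mod_cast h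

lemma prod_pow_le_pow_mul_card {ι : Type*} [Fintype ι] {p n : ι → ℕ} {b : ℕ} {i : ι}
    (hb : 0 < b) (hp : ∀ j, p j ≤ b) (hn : ∀ j, n j ≤ n i) :
    ∏ j, p j ^ n j ≤ b ^ (Fintype.card ι * n i) := by
  rw [mul_comm, pow_mul, ← Finset.card_univ]
  exact Finset.prod_le_pow_card _ _ _ fun j _ =>
    (Nat.pow_le_pow_left (hp j) _).trans (Nat.pow_le_pow_right hb (hn j))

/-- The orbit of `z = (z 1, ..., z (2q))` in the torus `T^{2q}` under the
semigroup of endomorphisms `w ↦ p_1^{n_1} ⋯ p_q^{n_q} • w` is not dense. -/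
theorem stmt2 (q : ℕ) (hq : 2 ≤ q) (p : Fin q → ℕ) (hp1 : ∀ i, 1 < p i)
    (hmono : StrictMono p) (N : ℕ)
    (hN : (q : ℝ) * Real.log (p ⟨q - 1, by omega⟩) / Real.log (p ⟨0, by omega⟩) < (N : ℝ))
    (zA zB : Fin q → ℝ)
    (hzA : ∀ i, zA i = ∑' k : ℕ, ((p i : ℝ) ^ (N ^ (2 * (k + 1))))⁻¹)
    (hzB : ∀ i, zB i = ∑' k : ℕ, ((p i : ℝ) ^ (N ^ (2 * (k + 1) + 1)))⁻¹)
    (z : (Fin q ⊕ Fin q) → AddCircle (1 : ℝ))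
    (hz : ∀ j : Fin q ⊕ Fin q,
      z j = ((Sum.elim zA zB j : ℝ) : AddCircle (1 : ℝ))) :
    ¬ Dense {w : (Fin q ⊕ Fin q) → AddCircle (1 : ℝ) |
        ∃ n : Fin q → ℕ, w = fun j => (∏ i, p i ^ n i) • z j} := by
  set pmin := p ⟨0, by omega⟩
  set pmax := p ⟨q - 1, by omega⟩
  have hpow : pmax ^ q < pmin ^ N :=
    pow_lt_pow_of_mul_log_div_log_lt (hp1 _) (zero_lt_one.trans (hp1 _)) hN
  have hpmin : ∀ i, pmin ≤ p i := fun i => hmono.monotone (by simp [Fin.le_def])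
  have hpmax : ∀ i, p i ≤ pmax := fun i => hmono.monotone (by rw [Fin.le_def]; simp; omega)
  have hN : 2 ≤ N := le_of_lt <| (Nat.pow_lt_pow_iff_right (hp1 _)).1 <|
    (Nat.pow_le_pow_right (zero_lt_one.trans (hp1 _)) hq).trans_lt
      ((Nat.pow_le_pow_left (hpmin _) q).trans_lt hpow)
  apply not_dense_of_forall_exists_coord_mem_Icc
  rintro _ ⟨n, rfl⟩
  obtain ⟨i, -, hi⟩ := Finset.exists_max_image Finset.univ n ⟨⟨0, by omega⟩, Finset.mem_univ _⟩
  have hm : ∏ j, p j ^ n j ≤ p i ^ (N * n i) :=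
    calc ∏ j, p j ^ n j ≤ pmax ^ (q * n i) := by
          simpa using prod_pow_le_pow_mul_card (zero_lt_one.trans (hp1 _)) hpmax
            fun j => hi j (Finset.mem_univ j)
      _ = (pmax ^ q) ^ n i := pow_mul ..
      _ ≤ (pmin ^ N) ^ n i := Nat.pow_le_pow_left hpow.le _
      _ = pmin ^ (N * n i) := (pow_mul ..).symm
      _ ≤ p i ^ (N * n i) := Nat.pow_le_pow_left (hpmin i) _
  obtain ⟨δ, hδ, r, hr, hmr⟩ := exists_nsmul_coe_lacunary_eq_coe_mem_Icc (hp1 i) hN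
    (Finset.dvd_prod_of_mem (fun j => p j ^ n j) (Finset.mem_univ i)) hm
  interval_cases δ
  · exact ⟨Sum.inl i, r, hr, by simpa [hz, hzA] using hmr⟩
  · exact ⟨Sum.inr i, r, hr, by simpa [hz, hzB] using hmr⟩
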